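/- Let A, B, φ, μ ∈ ℝ with 2|A| < |B|. Then the equation A·sin(2α + φ) + B·sin(α + μ) = 0 has exactly two solutions α in the interval [0, 2π). -/

import Mathlib

/-!
Substituting `β = α + μ` turns the equation into `f β = 0` for
`f β = A sin (2β + c) + B sin β`, `c = φ - 2μ`, and negating `A, B` we may take `B > 0`.
Then `f (π/2) > 0 > f (3π/2)`, so `f` has a zero on each of the arcs `(π/2, 3π/2)` and
`(3π/2, 5π/2)`. At a zero, `(B cos β)² > (2A cos (2β + c))²`, so
`f' β = 2A cos (2β + c) + B cos β` has the sign of `cos β`. Hence on each arc all zeros are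
crossings in the same direction, and a continuous function cannot cross zero twice in the
same direction without crossing back in between.
-/

open Real Set Filter Topology

section ZerosOfNonzeroDerivative

variable {f : ℝ → ℝ} {x₀ : ℝ}

lemma eventually_neg_nhdsGT_of_deriv_neg (hf : deriv f x₀ < 0) (hx : f x₀ = 0) :
    ∀ᶠ x in 𝓝[>] x₀, f x < 0 := by
  filter_upwards [nhdsWithin_le_nhds (eventually_nhdsWithin_sign_eq_of_deriv_neg hf hx),
    self_mem_nhdsWithin] with x hsign (hlt : x₀ < x)
  rwa [_root_.sign_neg (sub_neg.mpr hlt), sign_eq_neg_one_iff] at hsign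

lemma eventually_pos_nhdsLT_of_deriv_neg (hf : deriv f x₀ < 0) (hx : f x₀ = 0) :
    ∀ᶠ x in 𝓝[<] x₀, 0 < f x := by
  filter_upwards [nhdsWithin_le_nhds (eventually_nhdsWithin_sign_eq_of_deriv_neg hf hx),
    self_mem_nhdsWithin] with x hsign (hlt : x < x₀)
  rwa [_root_.sign_pos (sub_pos.mpr hlt), sign_eq_one_iff] at hsign

/-- If `z < w` were zeros, `f` would be positive at some `q` just before `w`. The last zero `u`
in `[z, q]` is followed by negative values, and the intermediate value theorem gives a zero
between these and `q`, beyond `u`. -/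
lemma subsingleton_zeros_of_deriv_neg {s : Set ℝ} (hs : s.OrdConnected) (hc : ContinuousOn f s)
    (hd : ∀ x ∈ s, f x = 0 → deriv f x < 0) : {x ∈ s | f x = 0}.Subsingleton := by
  suffices ∀ z ∈ s, ∀ w ∈ s, f z = 0 → f w = 0 → ¬ z < w by
    rintro z ⟨hzs, hz⟩ w ⟨hws, hw⟩
    exact le_antisymm (not_lt.mp (this w hws z hzs hw hz)) (not_lt.mp (this z hzs w hws hz hw))
  intro z hzs w hws hz hw hzw
  obtain ⟨q, hfq, hzq, hqw⟩ : ∃ q, 0 < f q ∧ z < q ∧ q < w :=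
    ((eventually_pos_nhdsLT_of_deriv_neg (hd w hws hw) hw).and
      (Ioo_mem_nhdsLT hzw)).exists.imp fun _ h => ⟨h.1, h.2⟩
  have hsub : Icc z q ⊆ s := (hs.out hzs hws).trans' (Icc_subset_Icc_right hqw.le)
  obtain ⟨u, ⟨⟨hzu, huq⟩, hu⟩, hmax⟩ : ∃ u, IsGreatest {x ∈ Icc z q | f x = 0} u :=
    (isCompact_Icc.of_isClosed_subset
      ((hc.mono hsub).preimage_isClosed_of_isClosed isClosed_Icc isClosed_singleton)
      inter_subset_left).exists_isGreatest ⟨z, ⟨le_rfl, hzq.le⟩, hz⟩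
  have huq : u < q := huq.lt_of_ne (by rintro rfl; linarith)
  obtain ⟨x, hfx, hux, hxq⟩ : ∃ x, f x < 0 ∧ u < x ∧ x < q :=
    ((eventually_neg_nhdsGT_of_deriv_neg (hd u (hsub ⟨hzu, huq.le⟩) hu) hu).and
      (Ioo_mem_nhdsGT huq)).exists.imp fun _ h => ⟨h.1, h.2⟩
  obtain ⟨y, ⟨hxy, hyq⟩, hy⟩ := intermediate_value_Icc hxq.le
    ((hc.mono hsub).mono (Icc_subset_Icc_left (hzu.trans hux.le))) ⟨hfx.le, hfq.le⟩
  linarith [hmax ⟨⟨by linarith, hyq⟩, hy⟩]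

lemma subsingleton_zeros_of_deriv_pos {s : Set ℝ} (hs : s.OrdConnected) (hc : ContinuousOn f s)
    (hd : ∀ x ∈ s, f x = 0 → 0 < deriv f x) : {x ∈ s | f x = 0}.Subsingleton := by
  simpa using subsingleton_zeros_of_deriv_neg (f := -f) hs hc.neg fun x hx hfx => by
    rw [deriv.neg']
    exact neg_neg_of_pos (hd x hx (neg_eq_zero.mp hfx))

end ZerosOfNonzeroDerivative

section CountingInPeriods

variable {α : Type*} [AddCommGroup α] [LinearOrder α] [IsOrderedAddMonoid α] {P : α → Prop}

lemma Function.Periodic.ncard_sep_Ico_eq [Archimedean α] {p : α} (hP : Function.Periodic P p)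
    (hp : 0 < p) (a b : α) :
    {x ∈ Ico a (a + p) | P x}.ncard = {x ∈ Ico b (b + p) | P x}.ncard := by
  have hPmod : ∀ c x, P (toIcoMod hp c x) ↔ P x := fun c x => by
    rw [toIcoMod, hP.sub_zsmul_eq]
  refine ncard_congr (fun x _ => toIcoMod hp b x)
    (fun x hx => ⟨toIcoMod_mem_Ico hp b x, (hPmod b x).mpr hx.2⟩) (fun x y hx hy hxy => ?_)
    (fun y hy => ⟨toIcoMod hp a y, ⟨toIcoMod_mem_Ico hp a y, (hPmod a y).mpr hy.2⟩, by
      rw [toIcoMod_toIcoMod, (toIcoMod_eq_self hp).mpr hy.1]⟩)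
  rw [← (toIcoMod_eq_self hp).mpr hx.1, ← (toIcoMod_eq_self hp).mpr hy.1,
    ← toIcoMod_toIcoMod hp a b x, hxy, toIcoMod_toIcoMod]

lemma ncard_sep_Ico_add_const (a b μ : α) :
    {x ∈ Ico a b | P (x + μ)}.ncard = {y ∈ Ico (a + μ) (b + μ) | P y}.ncard := by
  rw [← ncard_image_of_injective _ (add_left_injective μ)]
  congr 1
  ext y
  simp only [mem_image, mem_Ico]
  constructor
  · rintro ⟨x, ⟨⟨hax, hxb⟩, hPx⟩, rfl⟩
    exact ⟨⟨(add_le_add_iff_right μ).mpr hax, (add_lt_add_iff_right μ).mpr hxb⟩, hPx⟩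
  · rintro ⟨⟨hay, hyb⟩, hPy⟩
    exact ⟨y - μ, ⟨⟨le_sub_iff_add_le.mpr hay, sub_lt_iff_lt_add.mpr hyb⟩,
      by rwa [sub_add_cancel]⟩, sub_add_cancel y μ⟩

end CountingInPeriods

lemma abs_mul_sin_le (A x : ℝ) : |A * sin x| ≤ |A| := by
  rw [abs_mul]
  exact mul_le_of_le_one_right (abs_nonneg A) (abs_sin_le_one x)

noncomputable def twoHarmonicSin (A B c β : ℝ) : ℝ := A * sin (2 * β + c) + B * sin β

section TwoHarmonicSin

variable {A B c β : ℝ}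

lemma continuous_twoHarmonicSin : Continuous (twoHarmonicSin A B c) := by
  unfold twoHarmonicSin
  fun_prop

lemma periodic_twoHarmonicSin : Function.Periodic (twoHarmonicSin A B c) (2 * π) := fun β => by
  simp only [twoHarmonicSin, sin_add_two_pi,
    show 2 * (β + 2 * π) + c = 2 * β + c + 2 * π + 2 * π by ring]

lemma hasDerivAt_twoHarmonicSin (β : ℝ) :
    HasDerivAt (twoHarmonicSin A B c) (2 * A * cos (2 * β + c) + B * cos β) β := by
  have hinner : HasDerivAt (fun x => 2 * x + c) 2 β := by
    simpa using ((hasDerivAt_id β).const_mul 2).add_const c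
  exact ((hinner.sin.const_mul A).add ((hasDerivAt_sin β).const_mul B)).congr_deriv (by ring)

lemma twoHarmonicSin_neg_neg : twoHarmonicSin (-A) (-B) c = -twoHarmonicSin A B c := by
  ext β
  simp only [twoHarmonicSin, Pi.neg_apply, neg_mul, neg_add]

lemma twoHarmonicSin_pi_div_two_pos (hAB : |A| < B) : 0 < twoHarmonicSin A B c (π / 2) := by
  have hbound := abs_le.mp (abs_mul_sin_le A (2 * (π / 2) + c))
  simp only [twoHarmonicSin, sin_pi_div_two]
  linarith

lemma twoHarmonicSin_pi_div_two_add_pi_neg (hAB : |A| < B) :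
    twoHarmonicSin A B c (π / 2 + π) < 0 := by
  have hbound := abs_le.mp (abs_mul_sin_le A (2 * (π / 2 + π) + c))
  simp only [twoHarmonicSin, sin_add_pi, sin_pi_div_two]
  linarith

-- `(B cos β)² = B² - (A sin (2β + c))² > 4A² - 4(A sin (2β + c))² ≥ (2A cos (2β + c))²`
lemma sq_lt_sq_of_twoHarmonicSin_eq_zero (hAB : 2 * |A| < |B|)
    (hβ : twoHarmonicSin A B c β = 0) : (2 * A * cos (2 * β + c)) ^ 2 < (B * cos β) ^ 2 := by
  have hsq : 4 * A ^ 2 < B ^ 2 := by nlinarith [abs_nonneg A, sq_abs A, sq_abs B]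
  have hBsin : B * sin β = -(A * sin (2 * β + c)) := by
    unfold twoHarmonicSin at hβ
    linarith
  nlinarith [sin_sq_add_cos_sq β, sin_sq_add_cos_sq (2 * β + c), sq_nonneg (A * sin (2 * β + c)),
    congrArg (· ^ 2) hBsin]

lemma deriv_twoHarmonicSin_neg_of_cos_neg (hAB : 2 * |A| < B) (hβ : twoHarmonicSin A B c β = 0)
    (hcos : cos β < 0) : deriv (twoHarmonicSin A B c) β < 0 := by
  have hB : 0 < B := by linarith [abs_nonneg A]
  have hsq : (2 * A * cos (2 * β + c)) ^ 2 < (-(B * cos β)) ^ 2 := by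
    rw [neg_sq]
    exact sq_lt_sq_of_twoHarmonicSin_eq_zero (by rwa [abs_of_pos hB]) hβ
  have hlt := (abs_lt_of_sq_lt_sq' hsq (by nlinarith)).2
  rw [(hasDerivAt_twoHarmonicSin β).deriv]
  linarith

lemma deriv_twoHarmonicSin_pos_of_cos_pos (hAB : 2 * |A| < B) (hβ : twoHarmonicSin A B c β = 0)
    (hcos : 0 < cos β) : 0 < deriv (twoHarmonicSin A B c) β := by
  have hB : 0 < B := by linarith [abs_nonneg A]
  have hsq := sq_lt_sq_of_twoHarmonicSin_eq_zero (by rwa [abs_of_pos hB]) hβ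
  have hlt := (abs_lt_of_sq_lt_sq' hsq (by positivity)).1
  rw [(hasDerivAt_twoHarmonicSin β).deriv]
  linarith

lemma exists_zeros_twoHarmonicSin_Ioo_left_eq_singleton (hAB : 2 * |A| < B) :
    ∃ z, {β ∈ Ioo (π / 2) (π / 2 + π) | twoHarmonicSin A B c β = 0} = {z} := by
  have hA : |A| < B := by linarith [abs_nonneg A]
  obtain ⟨z, hz, hz0⟩ := intermediate_value_Ioo' (by linarith [pi_pos])
    continuous_twoHarmonicSin.continuousOn
    ⟨twoHarmonicSin_pi_div_two_add_pi_neg (c := c) hA, twoHarmonicSin_pi_div_two_pos hA⟩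
  refine ⟨z, (subsingleton_zeros_of_deriv_neg ordConnected_Ioo
    continuous_twoHarmonicSin.continuousOn fun x hx hx0 => ?_).eq_singleton_of_mem ⟨hz, hz0⟩⟩
  exact deriv_twoHarmonicSin_neg_of_cos_neg hAB hx0
    (cos_neg_of_pi_div_two_lt_of_lt hx.1 (hx.2.trans_eq (add_comm _ _)))

lemma exists_zeros_twoHarmonicSin_Ioo_right_eq_singleton (hAB : 2 * |A| < B) :
    ∃ z, {β ∈ Ioo (π / 2 + π) (π / 2 + 2 * π) | twoHarmonicSin A B c β = 0} = {z} := by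
  have hA : |A| < B := by linarith [abs_nonneg A]
  have hend : 0 < twoHarmonicSin A B c (π / 2 + 2 * π) := by
    rw [periodic_twoHarmonicSin]
    exact twoHarmonicSin_pi_div_two_pos hA
  obtain ⟨z, hz, hz0⟩ := intermediate_value_Ioo (by linarith [pi_pos])
    continuous_twoHarmonicSin.continuousOn ⟨twoHarmonicSin_pi_div_two_add_pi_neg hA, hend⟩
  refine ⟨z, (subsingleton_zeros_of_deriv_pos ordConnected_Ioo
    continuous_twoHarmonicSin.continuousOn fun x hx hx0 => ?_).eq_singleton_of_mem ⟨hz, hz0⟩⟩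
  refine deriv_twoHarmonicSin_pos_of_cos_pos hAB hx0 ?_
  rw [← cos_sub_two_pi]
  exact cos_pos_of_mem_Ioo ⟨by linarith [hx.1], by linarith [hx.2]⟩

lemma ncard_zeros_twoHarmonicSin_Ico (hAB : 2 * |A| < |B|) (a : ℝ) :
    {β ∈ Ico a (a + 2 * π) | twoHarmonicSin A B c β = 0}.ncard = 2 := by
  wlog hB : 0 < B generalizing A B
  · have hB0 : B ≠ 0 := by
      rintro rfl
      rw [abs_zero] at hAB
      linarith [abs_nonneg A]
    simpa [twoHarmonicSin_neg_neg] using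
      this (A := -A) (B := -B) (by simpa using hAB) (by linarith [(not_lt.mp hB).lt_of_ne hB0])
  rw [abs_of_pos hB] at hAB
  have hA : |A| < B := by linarith [abs_nonneg A]
  rw [Function.Periodic.ncard_sep_Ico_eq (P := fun β => twoHarmonicSin A B c β = 0)
    (fun β => congrArg (· = 0) (periodic_twoHarmonicSin β)) two_pi_pos a (π / 2)]
  obtain ⟨z₁, hz₁⟩ := exists_zeros_twoHarmonicSin_Ioo_left_eq_singleton (c := c) hAB
  obtain ⟨z₂, hz₂⟩ := exists_zeros_twoHarmonicSin_Ioo_right_eq_singleton (c := c) hAB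
  have hsplit : {β ∈ Ico (π / 2) (π / 2 + 2 * π) | twoHarmonicSin A B c β = 0} =
      {β ∈ Ioo (π / 2) (π / 2 + π) | twoHarmonicSin A B c β = 0} ∪
        {β ∈ Ioo (π / 2 + π) (π / 2 + 2 * π) | twoHarmonicSin A B c β = 0} := by
    ext β
    simp only [mem_union, mem_Ico, mem_Ioo]
    constructor
    · rintro ⟨⟨hlo, hhi⟩, h0⟩
      have hne : β ≠ π / 2 := by
        rintro rfl
        linarith [twoHarmonicSin_pi_div_two_pos (c := c) hA]
      have hne' : β ≠ π / 2 + π := by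
        rintro rfl
        linarith [twoHarmonicSin_pi_div_two_add_pi_neg (c := c) hA]
      rcases hne'.lt_or_gt with hlt | hgt
      · exact Or.inl ⟨⟨hlo.lt_of_ne' hne, hlt⟩, h0⟩
      · exact Or.inr ⟨⟨hgt, hhi⟩, h0⟩
    · rintro (⟨⟨hlo, hhi⟩, h0⟩ | ⟨⟨hlo, hhi⟩, h0⟩) <;>
        exact ⟨⟨by linarith [pi_pos], by linarith [pi_pos]⟩, h0⟩
  have hz₁_lt : z₁ < π / 2 + π := (hz₁.symm.subset (mem_singleton z₁)).1.2
  have hz₂_gt : π / 2 + π < z₂ := (hz₂.symm.subset (mem_singleton z₂)).1.1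
  rw [hsplit, hz₁, hz₂, singleton_union, ncard_pair (hz₁_lt.trans hz₂_gt).ne]

end TwoHarmonicSin

theorem two_solutions_of_trig_equation (A B φ μ : ℝ) (h : 2 * |A| < |B|) :
    {α ∈ Set.Ico (0:ℝ) (2 * Real.pi) |
      A * Real.sin (2 * α + φ) + B * Real.sin (α + μ) = 0}.ncard = 2 := by
  have hshift : {α ∈ Set.Ico (0:ℝ) (2 * Real.pi) |
      A * Real.sin (2 * α + φ) + B * Real.sin (α + μ) = 0} =
      {α ∈ Ico 0 (2 * π) | twoHarmonicSin A B (φ - 2 * μ) (α + μ) = 0} := by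
    ext α
    simp only [mem_ofPred_eq, twoHarmonicSin]
    rw [show 2 * (α + μ) + (φ - 2 * μ) = 2 * α + φ by ring]
  rw [hshift, ncard_sep_Ico_add_const (P := fun β => twoHarmonicSin A B (φ - 2 * μ) β = 0),
    zero_add, add_comm (2 * π)]
  exact ncard_zeros_twoHarmonicSin_Ico h μ
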